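/- Let G be a finite graph, let A and B be disjoint independent sets in G each of size at least two, and let v be a vertex outside A ∪ B. Assume every vertex a ∈ A has both a neighbour and a non-neighbour in B, and every vertex b ∈ B has both a neighbour and a non-neighbour in A. Then there is a set Q ⊆ A ∪ B ∪ {v} whose removal from G is admissible, with v ∈ Q, |Q ∩ A| ≤ 2 and |Q ∩ B| ≤ 2. -/

import Mathlib

/-- The removal of `S` from the graph `G` restricted to the remaining vertex set `W` is simple
admissible: `S ⊆ W`, `S` is independent, and the number of edges between `S` and `W \ S`
is even. -/
def SimpleAdmissibleIn {V : Type*} (G : SimpleGraph V) (W S : Set V) : Prop :=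
  S ⊆ W ∧ (∀ u ∈ S, ∀ v ∈ S, ¬ G.Adj u v) ∧
    Even ({p : V × V | G.Adj p.1 p.2 ∧ p.1 ∈ S ∧ p.2 ∈ W \ S}.ncard)

/-- The removal of `S` from the graph `G` restricted to the remaining vertex set `W` is
admissible: it is realized by a sequence of simple admissible removals. -/
def AdmissibleIn {V : Type*} (G : SimpleGraph V) (W S : Set V) : Prop :=
  ∃ (k : ℕ) (Ss : ℕ → Set V),
    (∀ i < k, SimpleAdmissibleIn G (W \ ⋃ j ∈ Finset.range i, Ss j) (Ss i)) ∧
    (⋃ i ∈ Finset.range k, Ss i) = S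

/-- The removal of `S` from the graph `G` is admissible. -/
def Admissible {V : Type*} (G : SimpleGraph V) (S : Set V) : Prop :=
  AdmissibleIn G Set.univ S

/-- The degree of `v` in the graph `G` restricted to the remaining vertex set `W`. -/
noncomputable def degIn {V : Type*} (G : SimpleGraph V) (W : Set V) (v : V) : ℕ :=
  (G.neighborSet v ∩ W).ncard

/-! Only degree parities matter: an independent set can be removed from `W` exactly when the
`W`-degrees of its vertices have even sum, and removing a vertex flips the degree parity of its
neighbours and of nothing else. If `v` has even degree it is removed alone. Otherwise a vertex
`y ∈ A ∪ B` that is odd and not adjacent to `v` is removed together with `v`, and one that is even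
and adjacent to `v` is removed just before `v`. If there is no such `y`, an even vertex with a
neighbour `b` on the other side is removed first, after which `b` and `v` are finished off in one
or two steps; if all of `A ∪ B` is odd, remove `a ∈ A` with a non-neighbour `b' ∈ B`, then a
neighbour `b ∈ B` of `a` (which is not adjacent to `b'`), and finally `v`, which has lost three
neighbours. -/

section

variable {V : Type*} [Finite V] {G : SimpleGraph V} {W S : Set V} {x y : V}

theorem ncard_crossEdges_of_independent (hS : ∀ u ∈ S, ∀ w ∈ S, ¬ G.Adj u w) :
    {p : V × V | G.Adj p.1 p.2 ∧ p.1 ∈ S ∧ p.2 ∈ W \ S}.ncard = ∑ᶠ x ∈ S, degIn G W x := by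
  have hcross : {p : V × V | G.Adj p.1 p.2 ∧ p.1 ∈ S ∧ p.2 ∈ W \ S} =
      ⋃ x ∈ S, Prod.mk x '' (G.neighborSet x ∩ W) := by
    ext ⟨u, w⟩
    simp only [Set.mem_ofPred_eq, Set.mem_sdiff, Set.mem_iUnion, Set.mem_image, Set.mem_inter_iff,
      SimpleGraph.mem_neighborSet, Prod.mk.injEq, exists_prop]
    constructor
    · rintro ⟨huw, hu, hw, -⟩
      exact ⟨u, hu, w, ⟨huw, hw⟩, rfl, rfl⟩
    · rintro ⟨u, hu, w, ⟨huw, hw⟩, rfl, rfl⟩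
      exact ⟨huw, hu, hw, fun hwS => hS u hu w hwS huw⟩
  rw [hcross, Set.Finite.ncard_biUnion (Set.toFinite S) (fun _ _ => Set.toFinite _)]
  · exact finsum_mem_congr rfl fun x _ =>
      Set.ncard_image_of_injective _ (Prod.mk_right_injective x)
  · intro x _ x' _ hxx'
    exact Set.disjoint_left.2 fun _ ⟨_, _, hp⟩ ⟨_, _, hp'⟩ =>
      hxx' (congrArg Prod.fst (hp.trans hp'.symm))

theorem simpleAdmissibleIn_iff_of_independent (hS : ∀ u ∈ S, ∀ w ∈ S, ¬ G.Adj u w) :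
    SimpleAdmissibleIn G W S ↔ S ⊆ W ∧ Even (∑ᶠ x ∈ S, degIn G W x) := by
  rw [SimpleAdmissibleIn, ncard_crossEdges_of_independent hS]
  exact ⟨fun h => ⟨h.1, h.2.2⟩, fun h => ⟨h.1, hS, h.2⟩⟩

theorem simpleAdmissibleIn_singleton (heven : Even (degIn G W x)) (hx : x ∈ W) :
    SimpleAdmissibleIn G W {x} := by
  rw [simpleAdmissibleIn_iff_of_independent, finsum_mem_singleton]
  · exact ⟨Set.singleton_subset_iff.2 hx, heven⟩
  · rintro u rfl w rfl
    exact G.irrefl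

theorem simpleAdmissibleIn_pair (hx : x ∈ W) (hy : y ∈ W) (hne : x ≠ y) (hxy : ¬ G.Adj x y)
    (hparity : Even (degIn G W x) ↔ Even (degIn G W y)) : SimpleAdmissibleIn G W {x, y} := by
  rw [simpleAdmissibleIn_iff_of_independent, finsum_mem_pair hne, Nat.even_add]
  · exact ⟨Set.insert_subset hx (Set.singleton_subset_iff.2 hy), hparity⟩
  · rintro u (rfl | rfl) w (rfl | rfl) huw
    exacts [G.irrefl huw, hxy huw, hxy huw.symm, G.irrefl huw]

end

section

variable {V : Type*} {G : SimpleGraph V} {W S T : Set V}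

theorem AdmissibleIn.empty : AdmissibleIn G W ∅ :=
  ⟨0, fun _ => ∅, by simp, by simp⟩

theorem SimpleAdmissibleIn.union (hS : SimpleAdmissibleIn G W S) (hT : AdmissibleIn G (W \ S) T) :
    AdmissibleIn G W (S ∪ T) := by
  obtain ⟨k, Ss, hSs, rfl⟩ := hT
  let Ss' : ℕ → Set V := fun | 0 => S | i + 1 => Ss i
  have hprefix (i : ℕ) :
      ⋃ j ∈ Finset.range (i + 1), Ss' j = S ∪ ⋃ j ∈ Finset.range i, Ss j := by
    rw [Finset.range_add_one', Finset.set_biUnion_insert, Finset.map_eq_image,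
      Finset.set_biUnion_finset_image]
    rfl
  refine ⟨k + 1, Ss', ?_, hprefix k⟩
  rintro (_ | i) hi
  · simpa using hS
  · rw [hprefix, ← Set.sdiff_sdiff]
    exact hSs i (by omega)

theorem SimpleAdmissibleIn.admissibleIn (hS : SimpleAdmissibleIn G W S) : AdmissibleIn G W S := by
  simpa using hS.union AdmissibleIn.empty

end

section

variable {V : Type*} {G : SimpleGraph V} {W : Set V} {x a : V}

theorem degIn_sdiff_singleton_of_not_adj (h : ¬ G.Adj x a) :
    degIn G (W \ {a}) x = degIn G W x := by
  rw [degIn, degIn, ← Set.inter_sdiff_assoc, Set.sdiff_singleton_eq_self (fun ha => h ha.1)]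

theorem even_degIn_sdiff_singleton_iff_of_adj [Finite V] (h : G.Adj x a) (ha : a ∈ W) :
    Even (degIn G (W \ {a}) x) ↔ ¬ Even (degIn G W x) := by
  rw [degIn, degIn, ← Set.inter_sdiff_assoc,
    ← Set.ncard_sdiff_singleton_add_one (show a ∈ G.neighborSet x ∩ W from ⟨h, ha⟩),
    Nat.even_add_one, not_not]

end

section

open Set

variable {V : Type*} {G : SimpleGraph V} {A B : Set V} {v : V}

def CanAbsorb (G : SimpleGraph V) (A B : Set V) (v : V) : Prop :=
  ∃ Q ⊆ A ∪ B ∪ {v}, Admissible G Q ∧ v ∈ Q ∧ (Q ∩ A).ncard ≤ 2 ∧ (Q ∩ B).ncard ≤ 2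

theorem CanAbsorb.symm (h : CanAbsorb G A B v) : CanAbsorb G B A v := by
  obtain ⟨Q, hQ, hadm, hvQ, hA, hB⟩ := h
  exact ⟨Q, union_comm A B ▸ hQ, hadm, hvQ, hB, hA⟩

theorem canAbsorb_of_admissible [Finite V] (hdisj : Disjoint A B) (hv : v ∉ A ∪ B)
    {Q s t : Set V} (hsA : s ⊆ A) (htB : t ⊆ B) (hs : s.ncard ≤ 2) (ht : t.ncard ≤ 2)
    (hQ : Admissible G Q) (hvQ : v ∈ Q) (hQst : Q ⊆ insert v (s ∪ t)) : CanAbsorb G A B v := by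
  refine ⟨Q, fun z hz => ?_, hQ, hvQ, (ncard_le_ncard fun z hz => ?_).trans hs,
    (ncard_le_ncard fun z hz => ?_).trans ht⟩
  · rcases hQst hz with rfl | hzs | hzt
    exacts [Or.inr rfl, Or.inl (Or.inl (hsA hzs)), Or.inl (Or.inr (htB hzt))]
  · rcases hQst hz.1 with rfl | hzs | hzt
    exacts [(hv (Or.inl hz.2)).elim, hzs, (disjoint_left.1 hdisj hz.2 (htB hzt)).elim]
  · rcases hQst hz.1 with rfl | hzs | hzt
    exacts [(hv (Or.inr hz.2)).elim, (disjoint_left.1 hdisj (hsA hzs) hz.2).elim, hzt]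

variable [Finite V] {a b b' : V}

theorem canAbsorb_of_parity_mismatch (hdisj : Disjoint A B) (hv : v ∉ A ∪ B)
    (hdv : ¬ Even (degIn G univ v)) (haA : a ∈ A)
    (ha : ¬ (G.Adj v a ↔ ¬ Even (degIn G univ a))) : CanAbsorb G A B v := by
  have hva : v ≠ a := fun h => hv (Or.inl (h ▸ haA))
  by_cases hadj : G.Adj v a
  · have hea : Even (degIn G univ a) := by tauto
    have hdv' : Even (degIn G (univ \ {a}) v) := by
      rwa [even_degIn_sdiff_singleton_iff_of_adj hadj (mem_univ a)]
    refine canAbsorb_of_admissible hdisj hv (singleton_subset_iff.2 haA) (empty_subset B)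
      (by simp) (by simp) ((simpleAdmissibleIn_singleton hea (mem_univ a)).union
        (simpleAdmissibleIn_singleton hdv' ⟨mem_univ v, hva⟩).admissibleIn) (Or.inr rfl) ?_
    simp
  · refine canAbsorb_of_admissible hdisj hv (singleton_subset_iff.2 haA) (empty_subset B)
      (by simp) (by simp) (simpleAdmissibleIn_pair (mem_univ v) (mem_univ a) hva hadj
        (by tauto)).admissibleIn (Or.inl rfl) ?_
    simp

theorem canAbsorb_of_even_of_adj (hdisj : Disjoint A B) (hv : v ∉ A ∪ B)
    (hdv : ¬ Even (degIn G univ v))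
    (hparity : ∀ y ∈ A ∪ B, G.Adj v y ↔ ¬ Even (degIn G univ y))
    (haA : a ∈ A) (hbB : b ∈ B) (hea : Even (degIn G univ a)) (hab : G.Adj a b) :
    CanAbsorb G A B v := by
  have hva : ¬ G.Adj v a := fun h => (hparity a (Or.inl haA)).1 h hea
  have hv_ne_a : v ≠ a := fun h => hv (Or.inl (h ▸ haA))
  have hv_ne_b : v ≠ b := fun h => hv (Or.inr (h ▸ hbB))
  have hb_ne_a : b ≠ a := fun h => disjoint_left.1 hdisj haA (h ▸ hbB)
  have hdv' : degIn G (univ \ {a}) v = degIn G univ v := degIn_sdiff_singleton_of_not_adj hva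
  have hdb' := even_degIn_sdiff_singleton_iff_of_adj (W := univ) hab.symm (mem_univ a)
  have hremove_a := simpleAdmissibleIn_singleton hea (mem_univ a)
  by_cases heb : Even (degIn G univ b)
  · have hvb : ¬ G.Adj v b := fun h => (hparity b (Or.inr hbB)).1 h heb
    refine canAbsorb_of_admissible hdisj hv (singleton_subset_iff.2 haA)
      (singleton_subset_iff.2 hbB) (by simp) (by simp)
      (hremove_a.union (simpleAdmissibleIn_pair (W := univ \ {a}) ⟨mem_univ v, hv_ne_a⟩
        ⟨mem_univ b, hb_ne_a⟩ hv_ne_b hvb (by rw [hdv', hdb']; tauto)).admissibleIn)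
      (by simp) ?_
    simp
  · have hvb : G.Adj v b := (hparity b (Or.inr hbB)).2 heb
    have hdv'' : Even (degIn G ((univ \ {a}) \ {b}) v) := by
      rwa [even_degIn_sdiff_singleton_iff_of_adj (W := univ \ {a}) hvb ⟨mem_univ b, hb_ne_a⟩,
        hdv']
    refine canAbsorb_of_admissible hdisj hv (singleton_subset_iff.2 haA)
      (singleton_subset_iff.2 hbB) (by simp) (by simp)
      (hremove_a.union ((simpleAdmissibleIn_singleton (hdb'.2 heb) ⟨mem_univ b, hb_ne_a⟩).union
        (simpleAdmissibleIn_singleton hdv'' ⟨⟨mem_univ v, hv_ne_a⟩, hv_ne_b⟩).admissibleIn))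
      (by simp) ?_
    simp

theorem canAbsorb_of_forall_odd (hdisj : Disjoint A B) (hv : v ∉ A ∪ B)
    (hdv : ¬ Even (degIn G univ v)) (hBind : ∀ b ∈ B, ∀ b' ∈ B, ¬ G.Adj b b')
    (hadj : ∀ y ∈ A ∪ B, G.Adj v y) (hodd : ∀ y ∈ A ∪ B, ¬ Even (degIn G univ y)) (haA : a ∈ A)
    (hab : ∃ b ∈ B, G.Adj a b) (hab' : ∃ b' ∈ B, ¬ G.Adj a b') : CanAbsorb G A B v := by
  obtain ⟨b, hbB, hab⟩ := hab
  obtain ⟨b', hb'B, hab'⟩ := hab'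
  have hne_A_B : ∀ x ∈ A, ∀ y ∈ B, x ≠ y := fun x hx y hy h => disjoint_left.1 hdisj hx (h ▸ hy)
  have hb_ne_b' : b ≠ b' := fun h => hab' (h ▸ hab)
  have hW : univ \ {a, b'} = (univ \ {a}) \ {b'} := by rw [sdiff_sdiff, insert_eq]
  have hdb : Even (degIn G ((univ \ {a}) \ {b'}) b) := by
    rw [degIn_sdiff_singleton_of_not_adj (hBind b hbB b' hb'B),
      even_degIn_sdiff_singleton_iff_of_adj hab.symm (mem_univ a)]
    exact hodd b (Or.inr hbB)
  have hdv' : Even (degIn G (((univ \ {a}) \ {b'}) \ {b}) v) := by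
    rw [even_degIn_sdiff_singleton_iff_of_adj (W := (univ \ {a}) \ {b'}) (hadj b (Or.inr hbB))
        ⟨⟨mem_univ b, (hne_A_B a haA b hbB).symm⟩, hb_ne_b'⟩,
      even_degIn_sdiff_singleton_iff_of_adj (W := univ \ {a}) (hadj b' (Or.inr hb'B))
        ⟨mem_univ b', (hne_A_B a haA b' hb'B).symm⟩,
      even_degIn_sdiff_singleton_iff_of_adj (hadj a (Or.inl haA)) (mem_univ a), not_not]
    exact hdv
  have hv_ne : ∀ y ∈ A ∪ B, v ≠ y := fun y hy h => hv (h ▸ hy)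
  have hQ : Admissible G ({a, b'} ∪ ({b} ∪ {v})) := by
    refine (simpleAdmissibleIn_pair (mem_univ a) (mem_univ b') (hne_A_B a haA b' hb'B) hab'
      (by simp only [hodd a (Or.inl haA), hodd b' (Or.inr hb'B)])).union ?_
    rw [hW]
    exact (simpleAdmissibleIn_singleton hdb ⟨⟨mem_univ b, (hne_A_B a haA b hbB).symm⟩,
      hb_ne_b'⟩).union (simpleAdmissibleIn_singleton hdv' ⟨⟨⟨mem_univ v, hv_ne a (Or.inl haA)⟩,
        hv_ne b' (Or.inr hb'B)⟩, hv_ne b (Or.inr hbB)⟩).admissibleIn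
  exact canAbsorb_of_admissible hdisj hv (singleton_subset_iff.2 haA)
    (insert_subset hbB (singleton_subset_iff.2 hb'B)) (by simp) (ncard_pair hb_ne_b').le hQ
    (by simp) (by intro z; simp only [mem_union, mem_insert_iff, mem_singleton_iff]; tauto)

end

theorem absorb_vertex_general {V : Type*} [Fintype V] (G : SimpleGraph V) (A B : Set V) (v : V)
    (hdisj : Disjoint A B)
    (hBind : ∀ b ∈ B, ∀ b' ∈ B, ¬ G.Adj b b')
    (hA2 : 2 ≤ A.ncard)
    (hv : v ∉ A ∪ B)
    (hAB : ∀ a ∈ A, (∃ b ∈ B, G.Adj a b) ∧ (∃ b ∈ B, ¬ G.Adj a b))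
    (hBA : ∀ b ∈ B, (∃ a ∈ A, G.Adj b a) ∧ (∃ a ∈ A, ¬ G.Adj b a)) :
    ∃ Q ⊆ A ∪ B ∪ {v}, Admissible G Q ∧ v ∈ Q ∧
      (Q ∩ A).ncard ≤ 2 ∧ (Q ∩ B).ncard ≤ 2 := by
  have hv' : v ∉ B ∪ A := by rwa [Set.union_comm]
  by_cases hdv : Even (degIn G Set.univ v)
  · exact canAbsorb_of_admissible hdisj hv (Set.empty_subset A) (Set.empty_subset B)
      (by simp) (by simp) (simpleAdmissibleIn_singleton hdv (Set.mem_univ v)).admissibleIn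
      rfl (by simp)
  by_cases hmismatch : ∃ y ∈ A ∪ B, ¬ (G.Adj v y ↔ ¬ Even (degIn G Set.univ y))
  · obtain ⟨y, hyA | hyB, hy⟩ := hmismatch
    · exact canAbsorb_of_parity_mismatch hdisj hv hdv hyA hy
    · exact (canAbsorb_of_parity_mismatch hdisj.symm hv' hdv hyB hy).symm
  have hparity : ∀ y ∈ A ∪ B, G.Adj v y ↔ ¬ Even (degIn G Set.univ y) :=
    fun y hy => not_not.1 fun h => hmismatch ⟨y, hy, h⟩
  by_cases heven : ∃ y ∈ A ∪ B, Even (degIn G Set.univ y)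
  · obtain ⟨y, hyA | hyB, hey⟩ := heven
    · obtain ⟨b, hbB, hyb⟩ := (hAB y hyA).1
      exact canAbsorb_of_even_of_adj hdisj hv hdv hparity hyA hbB hey hyb
    · obtain ⟨a, haA, hya⟩ := (hBA y hyB).1
      exact (canAbsorb_of_even_of_adj hdisj.symm hv' hdv (Set.union_comm A B ▸ hparity)
        hyB haA hey hya).symm
  obtain ⟨a, haA⟩ := Set.nonempty_of_ncard_ne_zero (show A.ncard ≠ 0 by omega)
  have hodd : ∀ y ∈ A ∪ B, ¬ Even (degIn G Set.univ y) := fun y hy hey => heven ⟨y, hy, hey⟩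
  exact canAbsorb_of_forall_odd hdisj hv hdv hBind (fun y hy => (hparity y hy).2 (hodd y hy))
    hodd haA (hAB a haA).1 (hAB a haA).2

/-- Absorbing a vertex: if `A` and `B` are disjoint independent sets of size at least two, each
vertex of `A` has a neighbour and a non-neighbour in `B` and vice versa, and `v ∉ A ∪ B`, then
there is an admissible removal of a set `Q ⊆ A ∪ B ∪ {v}` containing `v` with at most two
vertices removed from each of `A` and `B`. -/
theorem absorb_vertex {V : Type*} [Fintype V] (G : SimpleGraph V) (A B : Set V) (v : V)
    (hdisj : Disjoint A B)
    (hAind : ∀ a ∈ A, ∀ a' ∈ A, ¬ G.Adj a a')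
    (hBind : ∀ b ∈ B, ∀ b' ∈ B, ¬ G.Adj b b')
    (hA2 : 2 ≤ A.ncard) (hB2 : 2 ≤ B.ncard)
    (hv : v ∉ A ∪ B)
    (hAB : ∀ a ∈ A, (∃ b ∈ B, G.Adj a b) ∧ (∃ b ∈ B, ¬ G.Adj a b))
    (hBA : ∀ b ∈ B, (∃ a ∈ A, G.Adj b a) ∧ (∃ a ∈ A, ¬ G.Adj b a)) :
    ∃ Q ⊆ A ∪ B ∪ {v}, Admissible G Q ∧ v ∈ Q ∧
      (Q ∩ A).ncard ≤ 2 ∧ (Q ∩ B).ncard ≤ 2 :=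
  absorb_vertex_general G A B v hdisj hBind hA2 hv hAB hBA
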